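/- Let p ∈ (0,1), q ∈ (0,1) with q < p, and W > 0, v̄ with W < v̄ < 2W. Define β = q/p < 1 and h(t) = v̄·(t·β^t/(β^t - 1) - 1/(β-1)) - W·t for real t > 0. Then h is decreasing in t. -/

import Mathlib

/-!
Writing `u = β ^ t ∈ (0, 1)`, the derivative of `h` is `v̄ · u (u - 1 - log u) / (u - 1)² - W`.
The bound `sinh y ≤ y` for `y = log u ≤ 0` gives `u² - 1 ≤ 2 u log u`, which says exactly that the
fraction is at most `1 / 2`; hence the derivative is below `v̄ / 2 - W < 0`.
-/

open Set Real

lemma sq_sub_one_le_two_mul_mul_log {u : ℝ} (hu0 : 0 < u) (hu1 : u ≤ 1) :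
    u ^ 2 - 1 ≤ 2 * u * log u := by
  have hsinh : (u - u⁻¹) / 2 ≤ log u := by
    rw [← sinh_log hu0]
    exact sinh_le_self_iff.2 (log_nonpos hu0.le hu1)
  calc u ^ 2 - 1 = 2 * u * ((u - u⁻¹) / 2) := by field_simp
    _ ≤ 2 * u * log u := by gcongr

lemma mul_sub_one_sub_log_div_sq_le_half {u : ℝ} (hu0 : 0 < u) (hu1 : u < 1) :
    u * (u - 1 - log u) / (u - 1) ^ 2 ≤ 1 / 2 := by
  have hd : 0 < (u - 1) ^ 2 := by nlinarith
  rw [div_le_iff₀ hd]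
  nlinarith [sq_sub_one_le_two_mul_mul_log hu0 hu1.le]

lemma hasDerivAt_mul_rpow_div_rpow_sub_one {b t : ℝ} (hb : 0 < b) (hbt : b ^ t ≠ 1) :
    HasDerivAt (fun s => s * b ^ s / (b ^ s - 1))
      (b ^ t * (b ^ t - 1 - log (b ^ t)) / (b ^ t - 1) ^ 2) t := by
  have hpow : HasDerivAt (fun s => b ^ s) (b ^ t * log b) t :=
    (hasStrictDerivAt_const_rpow hb t).hasDerivAt
  have hne : b ^ t - 1 ≠ 0 := sub_ne_zero.2 hbt
  refine ((hasDerivAt_id t).mul hpow).div (hpow.sub_const 1) hne |>.congr_deriv ?_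
  simp only [id, Pi.mul_apply, log_rpow hb]
  field_simp
  ring

theorem stmt_11_general (p q W v : ℝ) (hp : p ∈ Ioo (0:ℝ) 1) (hq : q ∈ Ioo (0:ℝ) 1)
    (hqp : q < p) (hv1 : W < v) (hv2 : v < 2 * W)
    (β : ℝ) (hβ : β = q / p)
    (h : ℝ → ℝ)
    (hh : ∀ t, h t = v * (t * β ^ t / (β ^ t - 1) - 1 / (β - 1)) - W * t) :
    StrictAntiOn h (Ioi (0:ℝ)) := by
  have hβ0 : 0 < β := hβ ▸ div_pos hq.1 hp.1
  have hβ1 : β < 1 := hβ ▸ (div_lt_one hp.1).2 hqp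
  have hu : ∀ t ∈ Ioi (0:ℝ), 0 < β ^ t ∧ β ^ t < 1 := fun t ht =>
    ⟨rpow_pos_of_pos hβ0 t, rpow_lt_one hβ0.le hβ1 ht⟩
  have hderiv : ∀ t ∈ Ioi (0:ℝ), HasDerivAt h
      (v * (β ^ t * (β ^ t - 1 - log (β ^ t)) / (β ^ t - 1) ^ 2) - W) t := fun t ht => by
    rw [funext hh]
    exact (((hasDerivAt_mul_rpow_div_rpow_sub_one hβ0 (hu t ht).2.ne).sub_const _).const_mul v).sub
      ((hasDerivAt_id t).const_mul W) |>.congr_deriv (by simp)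
  refine strictAntiOn_of_hasDerivWithinAt_neg (convex_Ioi 0)
    (fun t ht => (hderiv t ht).continuousAt.continuousWithinAt)
    (fun t ht => (hderiv t (interior_subset ht)).hasDerivWithinAt) fun t ht => ?_
  rw [interior_Ioi] at ht
  have hv : 0 < v := by linarith
  have hhalf := mul_sub_one_sub_log_div_sq_le_half (hu t ht).1 (hu t ht).2
  linarith [mul_le_mul_of_nonneg_left hhalf hv.le]

theorem stmt_11 (p q W v : ℝ) (hp : p ∈ Ioo (0:ℝ) 1) (hq : q ∈ Ioo (0:ℝ) 1)
    (hqp : q < p) (hW : 0 < W) (hv1 : W < v) (hv2 : v < 2 * W)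
    (β : ℝ) (hβ : β = q / p)
    (h : ℝ → ℝ)
    (hh : ∀ t, h t = v * (t * β ^ t / (β ^ t - 1) - 1 / (β - 1)) - W * t) :
    StrictAntiOn h (Ioi (0:ℝ)) :=
  stmt_11_general p q W v hp hq hqp hv1 hv2 β hβ h hh
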